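/- arXiv:2104.02620 — 7 statements merged into one kernel-verified Lean document; each statement's English description precedes it below -/
import Mathlib

section
/- Let n ≥ 1 and let Φ, Ψ be invertible n×n complex matrices. Assume there is μ ∈ ℂ which is a primitive n-th root of unity such that Φ * Ψ = μ • (Ψ * Φ), and assume the characteristic polynomial of Φ has n distinct roots. Then the eigenvalues of Φ form a geometric progression with ratio μ: there exists a nonzero φ ∈ ℂ such that the multiset of roots of the characteristic polynomial of Φ equals the multiset of the n values φ·μ^0, φ·μ^1, …, φ·μ^{n−1} (each occurring once). -/
/-!
Rewriting `Φ * Ψ = μ • (Ψ * Φ)` as `Φ = μ • (Ψ * Φ * Ψ⁻¹)` shows that the spectrum of `Φ` is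
invariant under multiplication by `μ`. Starting from any eigenvalue `φ`, which is nonzero since
`Φ` is invertible, the eigenvalues therefore include the `n` distinct numbers `φ * μ ^ k`,
`k < n`; as `Φ` has at most `n` eigenvalues counted with multiplicity, these are all of them.
-/

open Polynomial
open scoped Pointwise

section GeometricProgression

variable {M : Type*} [CommMonoidWithZero M] [IsCancelMulZero M]

theorem IsPrimitiveRoot.nodup_map_range_mul_pow {μ : M} {n : ℕ} (hμ : IsPrimitiveRoot μ n)
    {φ : M} (hφ : φ ≠ 0) :
    ((Multiset.range n).map fun k => φ * μ ^ k).Nodup := by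
  refine (Multiset.nodup_range n).map_on fun i hi j hj hij => ?_
  rw [Multiset.mem_range] at hi hj
  exact hμ.pow_inj hi hj (mul_left_cancel₀ hφ hij)

theorem Multiset.eq_map_range_mul_pow_of_mul_mem {s : Multiset M} {μ φ : M} {n : ℕ}
    (hμ : IsPrimitiveRoot μ n) (hs : card s ≤ n) (hφ0 : φ ≠ 0) (hφ : φ ∈ s)
    (hmul : ∀ r ∈ s, μ * r ∈ s) :
    s = (range n).map fun k => φ * μ ^ k := by
  have hpow : ∀ k : ℕ, φ * μ ^ k ∈ s := by
    intro k
    induction k with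
    | zero => simpa using hφ
    | succ k ih => simpa [pow_succ, mul_comm, mul_left_comm] using hmul _ ih
  have hle : (range n).map (fun k => φ * μ ^ k) ≤ s := by
    rw [Multiset.le_iff_subset (hμ.nodup_map_range_mul_pow hφ0)]
    rintro _ hx
    obtain ⟨k, -, rfl⟩ := Multiset.mem_map.mp hx
    exact hpow k
  exact (Multiset.eq_of_le_of_card_le hle (by simpa using hs)).symm

end GeometricProgression

theorem spectrum.units_smul_eq_self_of_mul_eq_smul_mul {R A : Type*} [CommSemiring R] [Ring A]
    [Algebra R A] {a : A} (b : Aˣ) (c : Rˣ) (h : a * b = c • (b * a)) :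
    c • spectrum R a = spectrum R a := by
  have hconj : a = c • (b * a * ↑b⁻¹) := by
    rw [← smul_mul_assoc, ← h, Units.mul_inv_cancel_right]
  conv_rhs => rw [hconj]
  rw [spectrum.unit_smul_eq_smul, spectrum.units_conjugate]

namespace Matrix

variable {ι K : Type*} [Fintype ι] [DecidableEq ι] [Field K]

theorem mem_roots_charpoly_iff_mem_spectrum {A : Matrix ι ι K} {r : K} :
    r ∈ A.charpoly.roots ↔ r ∈ spectrum K A := by
  rw [mem_roots A.charpoly_monic.ne_zero, mem_spectrum_iff_isRoot_charpoly]

theorem mul_mem_roots_charpoly_of_mul_eq_smul_mul {A B : Matrix ι ι K} {c : K} (hB : IsUnit B)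
    (hc : c ≠ 0) (h : A * B = c • (B * A)) {r : K} (hr : r ∈ A.charpoly.roots) :
    c * r ∈ A.charpoly.roots := by
  rw [mem_roots_charpoly_iff_mem_spectrum] at hr ⊢
  rw [← spectrum.units_smul_eq_self_of_mul_eq_smul_mul hB.unit (Units.mk0 c hc) h]
  exact Set.smul_mem_smul_set hr

theorem ne_zero_of_mem_roots_charpoly {A : Matrix ι ι K} (hA : IsUnit A) {r : K}
    (hr : r ∈ A.charpoly.roots) : r ≠ 0 := by
  rw [mem_roots_charpoly_iff_mem_spectrum] at hr
  exact spectrum.ne_zero_of_mem_of_unit (a := hA.unit) hr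

end Matrix

theorem stmt_2_general (n : ℕ) (hn : 1 ≤ n) (Φ Ψ : Matrix (Fin n) (Fin n) ℂ)
    (hΦ : IsUnit Φ.det) (hΨ : IsUnit Ψ.det)
    (μ : ℂ) (hμ : IsPrimitiveRoot μ n)
    (hcomm : Φ * Ψ = μ • (Ψ * Φ)) :
    ∃ φ : ℂ, φ ≠ 0 ∧
      Φ.charpoly.roots = (Multiset.range n).map (fun k => φ * μ ^ k) := by
  have hΦu : IsUnit Φ := (Matrix.isUnit_iff_isUnit_det Φ).2 hΦ
  have hΨu : IsUnit Ψ := (Matrix.isUnit_iff_isUnit_det Ψ).2 hΨ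
  obtain ⟨φ, hroot⟩ : ∃ φ, Φ.charpoly.IsRoot φ := Complex.exists_root <| by
    rw [Matrix.charpoly_degree_eq_dim, Fintype.card_fin]
    exact_mod_cast hn
  have hφ : φ ∈ Φ.charpoly.roots := (mem_roots Φ.charpoly_monic.ne_zero).2 hroot
  have hφ0 : φ ≠ 0 := Matrix.ne_zero_of_mem_roots_charpoly hΦu hφ
  refine ⟨φ, hφ0, Multiset.eq_map_range_mul_pow_of_mul_mem hμ ?_ hφ0 hφ fun r hr => ?_⟩
  · simpa using Φ.charpoly.card_roots'
  · exact Matrix.mul_mem_roots_charpoly_of_mul_eq_smul_mul hΨu (hμ.ne_zero (by omega)) hcomm hr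

/-- Key intermediate step of Proposition 3.5 (zsobrenzcuadrado): if Φ Ψ = μ • (Ψ Φ)
with μ a primitive n-th root of unity and Φ has n distinct eigenvalues, then the
eigenvalues of Φ form a geometric progression with ratio μ. -/
theorem stmt_2 (n : ℕ) (hn : 1 ≤ n) (Φ Ψ : Matrix (Fin n) (Fin n) ℂ)
    (hΦ : IsUnit Φ.det) (hΨ : IsUnit Ψ.det)
    (μ : ℂ) (hμ : IsPrimitiveRoot μ n)
    (hcomm : Φ * Ψ = μ • (Ψ * Φ))
    (hroots : Φ.charpoly.roots.toFinset.card = n) :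
    ∃ φ : ℂ, φ ≠ 0 ∧
      Φ.charpoly.roots = (Multiset.range n).map (fun k => φ * μ ^ k) :=
  stmt_2_general n hn Φ Ψ hΦ hΨ μ hμ hcomm
end

section
/- Let n ≥ 1 and let f be a ℂ-linear endomorphism of ℂⁿ (of Fin n → ℂ). The set of one-dimensional ℂ-subspaces W of ℂⁿ with f(W) ⊆ W has exactly n elements if and only if the characteristic polynomial of f has n distinct roots. -/
open Polynomial Matrix Module Module.End Submodule

lemma aux_root_iff (n : ℕ) (f : Module.End ℂ (Fin n → ℂ)) (μ : ℂ) :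
    (LinearMap.charpoly f).IsRoot μ ↔ f.HasEigenvalue μ := by
  set A := LinearMap.toMatrix' (f : (Fin n → ℂ) →ₗ[ℂ] (Fin n → ℂ)) with hA
  have hcp : LinearMap.charpoly f = A.charpoly := by
    rw [hA, ← LinearMap.toMatrix_eq_toMatrix', LinearMap.charpoly_toMatrix]
  have heval : (A.charpoly).eval μ = (Matrix.scalar (Fin n) μ - A).det := by
    rw [Matrix.charpoly, _root_.eval_det, matPolyEquiv_charmatrix]
    simp
  have hmv : ∀ v, (Matrix.scalar (Fin n) μ - A) *ᵥ v = μ • v - f v := by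
    intro v
    rw [Matrix.sub_mulVec]
    congr 1
    · ext i
      simp [Matrix.mulVec_diagonal]
    · rw [← Matrix.toLin'_apply, hA, Matrix.toLin'_toMatrix']
  rw [Polynomial.IsRoot, hcp, heval, ← Matrix.exists_mulVec_eq_zero_iff]
  constructor
  · rintro ⟨v, hv, hv0⟩
    rw [hmv, sub_eq_zero] at hv0
    exact hasEigenvalue_of_hasEigenvector ⟨mem_eigenspace_iff.2 hv0.symm, hv⟩
  · rintro h
    obtain ⟨v, hv⟩ := h.exists_hasEigenvector
    exact ⟨v, hv.2, by rw [hmv, hv.apply_eq_smul, sub_self]⟩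

lemma aux_mem_T (n : ℕ) (f : Module.End ℂ (Fin n → ℂ)) (μ : ℂ) :
    μ ∈ (LinearMap.charpoly f).roots.toFinset ↔ f.HasEigenvalue μ := by
  rw [Multiset.mem_toFinset, Polynomial.mem_roots (f.charpoly_monic.ne_zero), aux_root_iff]

lemma aux_eigen_inv (n : ℕ) (f : Module.End ℂ (Fin n → ℂ)) (μ : ℂ) :
    Submodule.map (f : (Fin n → ℂ) →ₗ[ℂ] (Fin n → ℂ)) (f.eigenspace μ) ≤ f.eigenspace μ := by
  rintro x ⟨y, hy, rfl⟩
  rw [mem_eigenspace_iff.1 hy]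
  exact Submodule.smul_mem _ _ hy

lemma aux_count (n : ℕ) (f : Module.End ℂ (Fin n → ℂ))
    (h1 : ∀ μ, f.HasEigenvalue μ → Module.finrank ℂ (f.eigenspace μ) = 1) :
    {W : Submodule ℂ (Fin n → ℂ) |
        Module.finrank ℂ W = 1 ∧ Submodule.map f W ≤ W}.ncard
      = (LinearMap.charpoly f).roots.toFinset.card := by
  have himg : {W : Submodule ℂ (Fin n → ℂ) |
        Module.finrank ℂ W = 1 ∧ Submodule.map f W ≤ W}
      = f.eigenspace '' {μ | f.HasEigenvalue μ} := by
    ext W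
    constructor
    · rintro ⟨hW1, hW2⟩
      have hP : W.IsPrincipal := (Submodule.finrank_le_one_iff_isPrincipal W).1 hW1.le
      obtain ⟨v, hv⟩ := hP
      have hv0 : v ≠ 0 := by
        rintro rfl
        rw [hv, Submodule.span_zero_singleton] at hW1
        simp [finrank_bot] at hW1
      have hvW : v ∈ W := hv ▸ Submodule.mem_span_singleton_self v
      have hfv : f v ∈ W := hW2 (Submodule.mem_map_of_mem hvW)
      rw [hv] at hfv
      obtain ⟨a, ha⟩ := Submodule.mem_span_singleton.1 hfv
      have hev : f.HasEigenvector a v := ⟨mem_eigenspace_iff.2 ha.symm, hv0⟩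
      have haev : f.HasEigenvalue a := hasEigenvalue_of_hasEigenvector hev
      refine ⟨a, haev, ?_⟩
      have hle : W ≤ f.eigenspace a := by
        rw [hv, Submodule.span_le, Set.singleton_subset_iff]
        exact hev.1
      exact (Submodule.eq_of_le_of_finrank_eq hle (hW1.trans (h1 a haev).symm)).symm
    · rintro ⟨μ, hμ, rfl⟩
      exact ⟨h1 μ hμ, aux_eigen_inv n f μ⟩
  have hinj : Set.InjOn f.eigenspace {μ | f.HasEigenvalue μ} := by
    intro μ1 h1' μ2 h2' heq
    obtain ⟨v, hv⟩ := h1'.exists_hasEigenvector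
    have hv2 : v ∈ f.eigenspace μ2 := heq ▸ hv.1
    have := mem_eigenspace_iff.1 hv2
    rw [hv.apply_eq_smul] at this
    by_contra hne
    exact hv.2 (by
      have := sub_eq_zero.2 this
      rw [← sub_smul] at this
      exact (smul_eq_zero.1 this).resolve_left (sub_ne_zero.2 hne))
  have hset : {μ | f.HasEigenvalue μ}
      = ((LinearMap.charpoly f).roots.toFinset : Set ℂ) := by
    ext μ; simp [aux_mem_T n f μ]
  rw [himg, Set.ncard_image_of_injOn hinj, hset, Set.ncard_coe_finset]

lemma aux_infinite (n : ℕ) (f : Module.End ℂ (Fin n → ℂ)) (μ : ℂ)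
    (x y : Fin n → ℂ) (hx : x ∈ f.eigenspace μ) (hy : y ∈ f.eigenspace μ)
    (hx0 : x ≠ 0) (hyx : y ∉ Submodule.span ℂ {x}) :
    {W : Submodule ℂ (Fin n → ℂ) |
        Module.finrank ℂ W = 1 ∧ Submodule.map f W ≤ W}.Infinite := by
  have hy0 : y ≠ 0 := fun h => hyx (h ▸ Submodule.zero_mem _)
  have hnz : ∀ c : ℂ, x + c • y ≠ 0 := by
    intro c h
    rcases eq_or_ne c 0 with rfl | hc
    · simp at h; exact hx0 h
    · apply hyx
      rw [Submodule.mem_span_singleton]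
      refine ⟨-c⁻¹, ?_⟩
      have hxy : x = -(c • y) := by linear_combination (norm := module) h
      have : y = -(c⁻¹ • x) := by
        rw [hxy]
        match_scalars
        field_simp
      rw [this]; module
  refine Set.infinite_of_injective_forall_mem
    (f := fun c : ℂ => Submodule.span ℂ {x + c • y}) ?_ ?_
  · intro c c' hcc
    simp only at hcc
    have hmem : x + c • y ∈ Submodule.span ℂ {x + c' • y} := by
      rw [← hcc]; exact Submodule.mem_span_singleton_self _
    obtain ⟨a, ha⟩ := Submodule.mem_span_singleton.1 hmem
    have h2 : (a - 1) • x + (a * c' - c) • y = 0 := by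
      linear_combination (norm := module) ha
    rcases eq_or_ne a 1 with rfl | ha1
    · have : (c' - c) • y = 0 := by linear_combination (norm := module) h2
      exact (sub_eq_zero.1 ((smul_eq_zero.1 this).resolve_right hy0)).symm
    · exfalso
      have hxy : x = ((a - 1)⁻¹ * (c - a * c')) • y := by
        have h3 : (a - 1) • x = (c - a * c') • y := by
          linear_combination (norm := module) h2
        rw [mul_smul, ← h3, smul_smul, inv_mul_cancel₀ (sub_ne_zero.2 ha1), one_smul]
      have ht : ((a - 1)⁻¹ * (c - a * c')) ≠ 0 := by
        intro h; rw [h, zero_smul] at hxy; exact hx0 hxy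
      apply hyx
      rw [Submodule.mem_span_singleton]
      exact ⟨((a - 1)⁻¹ * (c - a * c'))⁻¹, by rw [hxy, smul_smul,
        inv_mul_cancel₀ ht, one_smul]⟩
  · intro c
    have huE : x + c • y ∈ f.eigenspace μ := Submodule.add_mem _ hx (Submodule.smul_mem _ _ hy)
    refine ⟨finrank_span_singleton (hnz c), ?_⟩
    rw [Submodule.map_span, Set.image_singleton, Submodule.span_le,
      Set.singleton_subset_iff, mem_eigenspace_iff.1 huE]
    exact Submodule.smul_mem _ _ (Submodule.mem_span_singleton_self _)

lemma aux_dim_one (n : ℕ) (f : Module.End ℂ (Fin n → ℂ))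
    (hT : (LinearMap.charpoly f).roots.toFinset.card = n)
    (μ : ℂ) (hμ : f.HasEigenvalue μ) : Module.finrank ℂ (f.eigenspace μ) = 1 := by
  set T := (LinearMap.charpoly f).roots.toFinset with hTdef
  have hμT : μ ∈ T := (aux_mem_T n f μ).2 hμ
  have hn1 : 1 ≤ n := hT ▸ Finset.card_pos.2 ⟨μ, hμT⟩
  have hpos : 1 ≤ Module.finrank ℂ (f.eigenspace μ) := by
    have : Nontrivial (f.eigenspace μ) := Submodule.nontrivial_iff_ne_bot.2 hμ
    exact Module.finrank_pos
  by_contra hne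
  have h2 : 2 ≤ Module.finrank ℂ (f.eigenspace μ) := by omega
  set s := T.erase μ with hs
  have hvec : ∀ ν : {x // x ∈ s}, ∃ v, f.HasEigenvector (ν : ℂ) v := by
    intro ν
    exact ((aux_mem_T n f _).1 (Finset.mem_of_mem_erase ν.2)).exists_hasEigenvector
  choose u hu using hvec
  have hind : LinearIndependent ℂ u :=
    f.eigenvectors_linearIndependent' (fun ν : {x // x ∈ s} => (ν : ℂ))
      Subtype.coe_injective u hu
  set t := ⨆ ν : {x // x ∈ s}, f.eigenspace (ν : ℂ) with ht
  have hst : Submodule.span ℂ (Set.range u) ≤ t := Submodule.span_le.2 (by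
    rintro _ ⟨ν, rfl⟩
    exact Submodule.mem_iSup_of_mem ν ((hu ν).1))
  have hcard : Module.finrank ℂ (Submodule.span ℂ (Set.range u)) = s.card := by
    rw [finrank_span_eq_card hind, Fintype.card_coe]
  have htrank : s.card ≤ Module.finrank ℂ t := hcard ▸ Submodule.finrank_mono hst
  have hdisj : Disjoint (f.eigenspace μ) t := by
    refine Disjoint.mono_right ?_ ((f.eigenspaces_iSupIndep) μ)
    exact iSup_le fun ν =>
      le_iSup_of_le (ν : ℂ) (le_iSup_of_le (Finset.ne_of_mem_erase ν.2) le_rfl)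
  have hsum := Submodule.finrank_sup_add_finrank_inf_eq (f.eigenspace μ) t
  rw [disjoint_iff.1 hdisj] at hsum
  have hle : Module.finrank ℂ ↥((f.eigenspace μ) ⊔ t) ≤ n := by
    have := Submodule.finrank_le ((f.eigenspace μ) ⊔ t)
    simpa [Module.finrank_pi] using this
  have hscard : s.card = n - 1 := by rw [hs, Finset.card_erase_of_mem hμT, hT]
  simp [finrank_bot] at hsum
  omega

/-- An endomorphism of ℂⁿ has exactly n invariant one-dimensional subspaces
(eigendirections, i.e. fixed points of the induced map on ℙ^{n-1}) if and only if
its characteristic polynomial has n distinct roots. -/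
theorem stmt_4 (n : ℕ) (hn : 1 ≤ n) (f : (Fin n → ℂ) →ₗ[ℂ] Fin n → ℂ) :
    {W : Submodule ℂ (Fin n → ℂ) |
        Module.finrank ℂ W = 1 ∧ Submodule.map f W ≤ W}.ncard = n ↔
      (LinearMap.charpoly f).roots.toFinset.card = n := by
  constructor
  · intro hS
    by_cases hbig : ∃ μ, Module.End.HasEigenvalue f μ ∧
        2 ≤ Module.finrank ℂ (Module.End.eigenspace f μ)
    · obtain ⟨μ, hμ, h2⟩ := hbig
      obtain ⟨x, hx⟩ := hμ.exists_hasEigenvector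
      have hlt : Submodule.span ℂ {x} < Module.End.eigenspace f μ := by
        refine lt_of_le_of_ne ?_ ?_
        · rw [Submodule.span_le, Set.singleton_subset_iff]; exact hx.1
        · intro h
          rw [← h, finrank_span_singleton hx.2] at h2
          omega
      obtain ⟨y, hyE, hyx⟩ := SetLike.exists_of_lt hlt
      have hinf := aux_infinite n f μ x y hx.1 hyE hx.2 hyx
      rw [Set.Infinite.ncard hinf] at hS
      omega
    · push_neg at hbig
      rw [← aux_count n f (fun μ hμ => ?_)]
      · exact hS
      · have hpos : 1 ≤ Module.finrank ℂ (Module.End.eigenspace f μ) := by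
          have : Nontrivial (Module.End.eigenspace f μ) :=
            Submodule.nontrivial_iff_ne_bot.2 hμ
          exact Module.finrank_pos
        have := hbig μ hμ
        omega
  · intro hT
    rw [aux_count n f (aux_dim_one n f hT)]
    exact hT
end

section
/- Let Δ be a group, r ≥ 1, X₀ a type with a Δ-action that is free (i.e. δ • x = x implies δ = 1), and F₁, …, F_r types each equipped with a Δ-action. Let Δ act diagonally on X₀ × (F₁ × ⋯ × F_r) and on each X₀ × F_i. Consider the canonical map P from the orbit-quotient (X₀ × ∏_i F_i)/Δ to the product ∏_i ((X₀ × F_i)/Δ) sending the class of (x, α) to the tuple of classes of (x, α_i), and for each i let b_i : (X₀ × F_i)/Δ → X₀/Δ be induced by the first projection. Then P is injective, and its range is exactly the set of tuples (c_1, …, c_r) with b_i(c_i) = b_j(c_j) for all i, j. In particular, (X₀ × ∏_i F_i)/Δ is in bijection with the fibered product of the quotients (X₀ × F_i)/Δ over X₀/Δ. -/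
open MulAction

/-- The canonical map from the quotient of `X₀ × ∏ i, F i` by the diagonal action
of `Δ` to the product of the quotients of the `X₀ × F i`. -/
def totalQuotToComponents (Δ : Type*) [Group Δ] {r : ℕ} (X₀ : Type*) [MulAction Δ X₀]
    (F : Fin r → Type*) [∀ i, MulAction Δ (F i)] :
    Quotient (orbitRel Δ (X₀ × ∀ i, F i)) → ∀ i, Quotient (orbitRel Δ (X₀ × F i)) :=
  fun q i =>
    Quotient.map' (fun p => (p.1, p.2 i))
      (fun a b hab => by
        obtain ⟨δ, h⟩ := hab
        refine ⟨δ, ?_⟩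
        have h1 : δ • b.1 = a.1 := congrArg Prod.fst h
        have h2 : δ • b.2 = a.2 := congrArg Prod.snd h
        have h2i : δ • b.2 i = a.2 i := by
          have := congrFun h2 i
          simpa using this
        exact Prod.ext h1 h2i) q

/-- The map from the quotient of `X₀ × Fi` to the quotient of `X₀` induced by the
first projection. -/
def componentToBase (Δ : Type*) [Group Δ] (X₀ : Type*) [MulAction Δ X₀]
    (Fi : Type*) [MulAction Δ Fi] :
    Quotient (orbitRel Δ (X₀ × Fi)) → Quotient (orbitRel Δ X₀) :=
  Quotient.map' Prod.fst
    (fun a b hab => by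
      obtain ⟨δ, h⟩ := hab
      exact ⟨δ, congrArg Prod.fst h⟩)

/-- Set-theoretic core of Theorem 1.5 (maintheorem2): if `Δ` acts freely on `X₀`,
then the quotient `(X₀ × ∏ i, F i)/Δ` maps injectively into `∏ i, (X₀ × F i)/Δ`,
with range exactly the fibered product over `X₀/Δ`. -/
theorem stmt_5 (Δ : Type*) [Group Δ] (r : ℕ) (hr : 1 ≤ r)
    (X₀ : Type*) [MulAction Δ X₀]
    (hfree : ∀ (δ : Δ) (x : X₀), δ • x = x → δ = 1)
    (F : Fin r → Type*) [∀ i, MulAction Δ (F i)] :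
    Function.Injective (totalQuotToComponents Δ X₀ F) ∧
      Set.range (totalQuotToComponents Δ X₀ F) =
        {c : ∀ i, Quotient (orbitRel Δ (X₀ × F i)) |
          ∀ i j, componentToBase Δ X₀ (F i) (c i) =
            componentToBase Δ X₀ (F j) (c j)} := by
  have i0 : Fin r := ⟨0, hr⟩
  constructor
  · intro q₁ q₂ h
    induction q₁ using Quotient.inductionOn' with | h a =>
    induction q₂ using Quotient.inductionOn' with | h b =>
    -- for each i, get δ_i
    have hδ : ∀ i, ∃ δ : Δ, δ • b.1 = a.1 ∧ δ • b.2 i = a.2 i := by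
      intro i
      have := congrFun h i
      have := Quotient.exact' this
      obtain ⟨δ, hδ⟩ := this
      exact ⟨δ, congrArg Prod.fst hδ, congrArg Prod.snd hδ⟩
    choose δ hδ1 hδ2 using hδ
    have hsame : ∀ i, δ i = δ i0 := by
      intro i
      have : ((δ i0)⁻¹ * δ i) • b.1 = b.1 := by
        rw [mul_smul, hδ1 i, ← hδ1 i0, inv_smul_smul]
      exact (inv_mul_eq_one.mp (hfree _ _ this)).symm
    apply Quotient.sound'
    refine ⟨δ i0, ?_⟩
    refine Prod.ext (hδ1 i0) ?_
    funext i
    have : δ i0 • b.2 i = a.2 i := by rw [← hsame i]; exact hδ2 i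
    simpa using this
  · ext c
    constructor
    · rintro ⟨q, rfl⟩ i j
      induction q using Quotient.inductionOn' with | h a =>
      simp only [totalQuotToComponents, componentToBase, Quotient.map'_mk'']
    · intro hc
      -- choose representatives
      have hrep : ∀ i, ∃ p : X₀ × F i, Quotient.mk'' p = c i :=
        fun i => ⟨Quotient.out (c i), Quotient.out_eq _⟩
      choose p hp using hrep
      -- base classes all equal
      have hbase : ∀ i, ∃ δ : Δ, δ • (p i).1 = (p i0).1 := by
        intro i
        have := hc i i0
        rw [← hp i, ← hp i0] at this
        simp only [componentToBase, Quotient.map'_mk''] at this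
        exact Quotient.exact' this.symm
      choose δ hδ using hbase
      refine ⟨Quotient.mk'' ((p i0).1, fun i => δ i • (p i).2), ?_⟩
      funext i
      simp only [totalQuotToComponents, Quotient.map'_mk'']
      rw [← hp i]
      apply Quotient.sound'
      exact ⟨δ i, Prod.ext (hδ i) rfl⟩
end

section
/- Let E be an additively written abelian group, let n ≥ 1, and let x ∈ E be an element of additive order exactly n+1. Let M be a multiset over E with card M = n+1 and sum M = 0. Then M.map (e ↦ e + x) = M if and only if there exists z ∈ E with (n+1) • z + (n(n+1)/2) • x = 0 and M = (Multiset.range (n+1)).map (k ↦ z + k • x), i.e. M is the multiset {z, z+x, z+2x, …, z+n·x}. -/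
/-!
A multiset fixed by translation by `x` is closed under adding `x`, so together with any of its
points `z` it contains the whole orbit `{z, z + x, …, z + (m - 1)x}`, `m` the order of `x`.
These `m` points are distinct, so when `card M = m` they exhaust `M`; the sum condition is then
just `M.sum = 0` evaluated on this progression. Conversely, translating the progression by `x`
only moves `z + (m - 1)x` to `z + m x = z`.
-/

namespace Multiset

lemma map_range_succ_eq_of_eq {α : Type*} {f : ℕ → α} {n : ℕ} (hf : f n = f 0) :
    (range n).map (fun k => f (k + 1)) = (range n).map f := by
  cases n with
  | zero => rfl
  | succ m =>
    calc (range (m + 1)).map (fun k => f (k + 1))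
        = f 0 ::ₘ (range m).map (fun k => f (k + 1)) := by rw [range_succ, map_cons, hf]
      _ = (range (1 + m)).map f := by
        rw [range_add, map_add, map_map]
        simp [Nat.add_comm 1]
      _ = (range (m + 1)).map f := by rw [Nat.add_comm]

end Multiset

open Multiset

section Progression

variable {E : Type*} [AddCommGroup E]

lemma sum_map_range_add_nsmul (z x : E) (n : ℕ) :
    ((range (n + 1)).map (fun k => z + k • x)).sum = (n + 1) • z + (n * (n + 1) / 2) • x := by
  change ∑ k ∈ Finset.range (n + 1), (z + k • x) = _
  rw [Finset.sum_add_distrib, Finset.sum_const, Finset.card_range, ← Finset.sum_smul,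
    Finset.sum_range_id, Nat.add_sub_cancel, Nat.mul_comm]

lemma nodup_map_range_add_nsmul (z x : E) :
    ((range (addOrderOf x)).map (fun k => z + k • x)).Nodup :=
  (nodup_range _).map_on fun _ hi _ hj hij =>
    nsmul_injOn_Iio_addOrderOf (mem_range.mp hi) (mem_range.mp hj) (add_left_cancel hij)

lemma map_add_map_range_add_nsmul (z x : E) :
    ((range (addOrderOf x)).map (fun k => z + k • x)).map (· + x) =
      (range (addOrderOf x)).map (fun k => z + k • x) := by
  rw [map_map, ← map_range_succ_eq_of_eq (f := fun k => z + k • x) (by simp)]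
  simp only [Function.comp_def, succ_nsmul, add_assoc]

variable {M : Multiset E} {x : E}

lemma add_nsmul_mem_of_map_add_eq (h : M.map (· + x) = M) {z : E} (hz : z ∈ M) (k : ℕ) :
    z + k • x ∈ M := by
  induction k with
  | zero => simpa using hz
  | succ k ih =>
    rw [succ_nsmul, ← add_assoc, ← h]
    exact mem_map_of_mem _ ih

lemma eq_map_range_add_nsmul_of_map_add_eq (h : M.map (· + x) = M)
    (hcard : card M = addOrderOf x) {z : E} (hz : z ∈ M) :
    M = (range (addOrderOf x)).map (fun k => z + k • x) := by
  have hle : (range (addOrderOf x)).map (fun k => z + k • x) ≤ M := by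
    rw [le_iff_subset (nodup_map_range_add_nsmul z x)]
    rintro _ hy
    obtain ⟨k, -, rfl⟩ := mem_map.mp hy
    exact add_nsmul_mem_of_map_add_eq h hz k
  exact (eq_of_le_of_card_le hle (by simp [hcard])).symm

end Progression

theorem stmt_8_general (E : Type*) [AddCommGroup E] (n : ℕ) (x : E)
    (hx : addOrderOf x = n + 1) (M : Multiset E)
    (hcard : Multiset.card M = n + 1) (hsum : M.sum = 0) :
    M.map (fun e => e + x) = M ↔
      ∃ z : E, (n + 1) • z + (n * (n + 1) / 2) • x = 0 ∧
        M = (Multiset.range (n + 1)).map (fun k => z + k • x) := by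
  constructor
  · intro h
    obtain ⟨z, hz⟩ := card_pos_iff_exists_mem.mp (by rw [hcard]; exact n.succ_pos)
    have hM := eq_map_range_add_nsmul_of_map_add_eq h (hcard.trans hx.symm) hz
    rw [hx] at hM
    refine ⟨z, ?_, hM⟩
    rw [← sum_map_range_add_nsmul, ← hM, hsum]
  · rintro ⟨z, -, rfl⟩
    simpa [hx] using map_add_map_range_add_nsmul z x

/-- Characterization of fixed points in Lemma 3.4 (Fix): a multiset `M` of
cardinality `n+1` with sum `0` over an abelian group is invariant under
translation by an element `x` of order `n+1` if and only if it is of the form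
`{z, z+x, …, z+n·x}` for some `z` with `(n+1)z + (n(n+1)/2)x = 0`. -/
theorem stmt_8 (E : Type*) [AddCommGroup E] (n : ℕ) (hn : 1 ≤ n) (x : E)
    (hx : addOrderOf x = n + 1) (M : Multiset E)
    (hcard : Multiset.card M = n + 1) (hsum : M.sum = 0) :
    M.map (fun e => e + x) = M ↔
      ∃ z : E, (n + 1) • z + (n * (n + 1) / 2) • x = 0 ∧
        M = (Multiset.range (n + 1)).map (fun k => z + k • x) :=
  stmt_8_general E n x hx M hcard hsum
end

section
/- Let E be an additively written abelian group and n ≥ 1. Let x, y ∈ E each have additive order exactly n+1, with ⟨x⟩ ⊓ ⟨y⟩ = {0}. Assume the map e ↦ (n+1) • e is surjective on E and that its kernel is exactly the subgroup generated by x and y. Then the set of multisets M over E with card M = n+1, sum M = 0, and M.map (e ↦ e + x) = M has exactly n+1 elements. -/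
/-! An `x`-invariant multiset of cardinality `addOrderOf x` containing `e` contains the whole
coset `e + ⟨x⟩`, hence is exactly that coset, each point once; its sum is `(n + 1) • e + s`, where
`s` is the sum of `⟨x⟩`. Fixing `t` with `(n + 1) • t = -s`, the admissible `e` form the coset
`t + ker (n + 1)• = t + (⟨x⟩ ⊕ ⟨y⟩)`, and two of them give the same multiset iff they differ by an
element of `⟨x⟩`. So the invariant multisets are indexed by `⟨y⟩`, which has `n + 1` elements. -/

open AddSubgroup

section TranslationOrbit

variable {E : Type*} [AddCommGroup E] {x : E}

noncomputable def translationOrbit (x e : E) : Multiset E :=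
  (Multiset.range (addOrderOf x)).map fun k => e + k • x

@[simp]
theorem card_translationOrbit (x e : E) : Multiset.card (translationOrbit x e) = addOrderOf x := by
  simp [translationOrbit]

theorem sum_translationOrbit (x e : E) :
    (translationOrbit x e).sum = addOrderOf x • e + (translationOrbit x 0).sum := by
  simp [translationOrbit, Multiset.sum_map_add]

theorem mem_translationOrbit (hx : IsOfFinAddOrder x) {e a : E} :
    a ∈ translationOrbit x e ↔ a - e ∈ zmultiples x := by
  classical
  rw [hx.mem_zmultiples_iff_mem_range_addOrderOf]
  simp [translationOrbit, eq_sub_iff_add_eq']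

theorem nodup_translationOrbit (x e : E) : (translationOrbit x e).Nodup :=
  (Multiset.nodup_range _).map_on fun _ hk _ hl hkl =>
    nsmul_injOn_Iio_addOrderOf (Multiset.mem_range.mp hk) (Multiset.mem_range.mp hl)
      (add_left_cancel hkl)

theorem translationOrbit_eq_translationOrbit_iff (hx : IsOfFinAddOrder x) {e e' : E} :
    translationOrbit x e = translationOrbit x e' ↔ e' - e ∈ zmultiples x := by
  rw [(nodup_translationOrbit x e).ext (nodup_translationOrbit x e')]
  simp only [mem_translationOrbit hx]
  refine ⟨fun h => by simpa using neg_mem ((h e).mp (by simp)), fun h a => ?_⟩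
  rw [← sub_add_sub_cancel a e' e, add_mem_cancel_right h]

theorem map_add_translationOrbit (hx : IsOfFinAddOrder x) (e : E) :
    (translationOrbit x e).map (· + x) = translationOrbit x e := by
  have hshift : (translationOrbit x e).map (· + x) = translationOrbit x (e + x) := by
    simp only [translationOrbit, Multiset.map_map, Function.comp_def, add_right_comm]
  rw [hshift, translationOrbit_eq_translationOrbit_iff hx]
  simp

theorem eq_translationOrbit_of_map_add_eq {M : Multiset E} (hM : M.map (· + x) = M)
    (hcard : Multiset.card M = addOrderOf x) {e : E} (he : e ∈ M) :
    M = translationOrbit x e := by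
  have hmem : ∀ k : ℕ, e + k • x ∈ M := by
    intro k
    induction k with
    | zero => simpa using he
    | succ k ih =>
      rw [← hM, succ_nsmul, ← add_assoc]
      exact Multiset.mem_map_of_mem _ ih
  have hle : translationOrbit x e ≤ M := by
    rw [Multiset.le_iff_subset (nodup_translationOrbit x e)]
    intro a ha
    obtain ⟨k, -, rfl⟩ := Multiset.mem_map.mp ha
    exact hmem k
  exact (Multiset.eq_of_le_of_card_le hle (by simp [hcard])).symm

theorem setOf_map_add_eq_self_eq_image (hx : IsOfFinAddOrder x) :
    {M : Multiset E | Multiset.card M = addOrderOf x ∧ M.sum = 0 ∧ M.map (· + x) = M} =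
      translationOrbit x '' {e | addOrderOf x • e + (translationOrbit x 0).sum = 0} := by
  ext M
  constructor
  · rintro ⟨hcard, hsum, hM⟩
    obtain ⟨e, he⟩ := Multiset.card_pos_iff_exists_mem.mp (hcard ▸ hx.addOrderOf_pos)
    obtain rfl := eq_translationOrbit_of_map_add_eq hM hcard he
    exact ⟨e, (sum_translationOrbit x e).symm.trans hsum, rfl⟩
  · rintro ⟨e, he, rfl⟩
    exact ⟨card_translationOrbit x e, by rwa [sum_translationOrbit], map_add_translationOrbit hx e⟩

theorem ncard_image_translationOrbit (hx : IsOfFinAddOrder x) {L : AddSubgroup E}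
    (hL : zmultiples x ⊓ L = ⊥) (t : E) :
    (translationOrbit x '' {e | e - t ∈ zmultiples x ⊔ L}).ncard = Nat.card L := by
  have himage : translationOrbit x '' {e | e - t ∈ zmultiples x ⊔ L} =
      (fun c => translationOrbit x (t + c)) '' L := by
    ext M
    constructor
    · rintro ⟨e, he, rfl⟩
      obtain ⟨a, ha, c, hc, hac⟩ := mem_sup.mp he
      refine ⟨c, hc, (translationOrbit_eq_translationOrbit_iff hx).mpr ?_⟩
      rwa [show e - (t + c) = a by rw [sub_add_eq_sub_sub, ← hac, add_sub_cancel_right]]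
    · rintro ⟨c, hc, rfl⟩
      exact ⟨t + c, by simpa using mem_sup_right hc, rfl⟩
  have hinj : Set.InjOn (fun c => translationOrbit x (t + c)) L := by
    intro c hc c' hc' h
    have hmem : c' - c ∈ zmultiples x ⊓ L :=
      mem_inf.mpr
        ⟨by simpa using (translationOrbit_eq_translationOrbit_iff hx).mp h, L.sub_mem hc' hc⟩
    rw [hL, mem_bot, sub_eq_zero] at hmem
    exact hmem.symm
  rw [himage, hinj.ncard_image, ← Nat.card_coe_set_eq, SetLike.coe_sort_coe]

end TranslationOrbit

theorem stmt_9_general (E : Type*) [AddCommGroup E] (n : ℕ) (x y : E)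
    (hx : addOrderOf x = n + 1) (hy : addOrderOf y = n + 1)
    (hxy : AddSubgroup.zmultiples x ⊓ AddSubgroup.zmultiples y = ⊥)
    (hsurj : Function.Surjective (fun e : E => (n + 1) • e))
    (hker : ∀ e : E, (n + 1) • e = 0 ↔ e ∈ AddSubgroup.closure ({x, y} : Set E)) :
    {M : Multiset E | Multiset.card M = n + 1 ∧ M.sum = 0 ∧
        M.map (fun e => e + x) = M}.ncard = n + 1 := by
  have hxfin : IsOfFinAddOrder x := addOrderOf_pos_iff.mp (by omega)
  obtain ⟨t, ht : (n + 1) • t = -(translationOrbit x 0).sum⟩ := hsurj _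
  have hsolutions : {e | addOrderOf x • e + (translationOrbit x 0).sum = 0} =
      {e | e - t ∈ zmultiples x ⊔ zmultiples y} := by
    ext e
    rw [Set.mem_ofPred_eq, Set.mem_ofPred_eq, zmultiples_eq_closure, zmultiples_eq_closure,
      ← AddSubgroup.closure_union, Set.singleton_union, ← hker, hx, smul_sub, ht, sub_neg_eq_add]
  rw [← hx, setOf_map_add_eq_self_eq_image hxfin, hsolutions,
    ncard_image_translationOrbit hxfin hxy, Nat.card_zmultiples, hx, hy]

/-- Counting statement of Lemma 3.4 (Fix): under the stated torsion hypotheses,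
the set of multisets of cardinality `n+1` with sum `0` that are invariant under
translation by `x` has exactly `n+1` elements. -/
theorem stmt_9 (E : Type*) [AddCommGroup E] (n : ℕ) (hn : 1 ≤ n) (x y : E)
    (hx : addOrderOf x = n + 1) (hy : addOrderOf y = n + 1)
    (hxy : AddSubgroup.zmultiples x ⊓ AddSubgroup.zmultiples y = ⊥)
    (hsurj : Function.Surjective (fun e : E => (n + 1) • e))
    (hker : ∀ e : E, (n + 1) • e = 0 ↔ e ∈ AddSubgroup.closure ({x, y} : Set E)) :
    {M : Multiset E | Multiset.card M = n + 1 ∧ M.sum = 0 ∧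
        M.map (fun e => e + x) = M}.ncard = n + 1 :=
  stmt_9_general E n x y hx hy hxy hsurj hker
end

section
/- Let E be an additively written abelian group and n ≥ 1. Let x, y ∈ E each have additive order exactly n+1, with ⟨x⟩ ⊓ ⟨y⟩ = {0}. Then there is no multiset M over E with card M = n+1 and sum M = 0 satisfying both M.map (e ↦ e + x) = M and M.map (e ↦ e + y) = M. -/
/-- Disjointness statement of Lemma 3.4 (Fix): no multiset of cardinality `n+1`
with sum `0` is simultaneously invariant under translation by `x` and by `y`,
where `x` and `y` are independent elements of order `n+1`. -/
theorem stmt_10 (E : Type*) [AddCommGroup E] (n : ℕ) (hn : 1 ≤ n) (x y : E)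
    (hx : addOrderOf x = n + 1) (hy : addOrderOf y = n + 1)
    (hxy : AddSubgroup.zmultiples x ⊓ AddSubgroup.zmultiples y = ⊥) :
    ¬ ∃ M : Multiset E, Multiset.card M = n + 1 ∧ M.sum = 0 ∧
        M.map (fun e => e + x) = M ∧ M.map (fun e => e + y) = M := by
  classical
  rintro ⟨M, hcard, -, hMx, hMy⟩
  -- M is nonempty
  obtain ⟨a, ha⟩ := Multiset.exists_mem_of_ne_zero (s := M)
    (by intro h; rw [h] at hcard; simp at hcard)
  -- invariance: b ∈ M → b + y ∈ M
  have hstepy : ∀ b ∈ M, b + y ∈ M := by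
    intro b hb
    have : b + y ∈ M.map (fun e => e + y) := Multiset.mem_map_of_mem _ hb
    rwa [hMy] at this
  have hky : ∀ k : ℕ, a + k • y ∈ M := by
    intro k
    induction k with
    | zero => simpa using ha
    | succ k ih =>
      have := hstepy _ ih
      convert this using 1
      rw [succ_nsmul, add_assoc]
  -- distinctness of a + k • y for k < n + 1
  have hinj : ∀ k ∈ Finset.range (n+1), ∀ j ∈ Finset.range (n+1),
      a + k • y = a + j • y → k = j := by
    intro k hk j hj h
    simp only [Finset.mem_range] at hk hj
    have h' : k • y = j • y := by
      have := add_left_cancel h; exact this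
    rcases le_total k j with hle | hle
    · have : (j - k) • y = 0 := by
        have h2 : (j - k) • y + k • y = j • y := by
          rw [← add_nsmul]; congr 1; omega
        rw [h'] at h2
        exact add_right_cancel (by rw [h2, zero_add])
      have hd : (n+1) ∣ (j - k) := hy ▸ (addOrderOf_dvd_iff_nsmul_eq_zero).2 this
      have := Nat.eq_zero_of_dvd_of_lt hd (by omega)
      omega
    · have : (k - j) • y = 0 := by
        have h2 : (k - j) • y + j • y = k • y := by
          rw [← add_nsmul]; congr 1; omega
        rw [← h'] at h2
        exact add_right_cancel (by rw [h2, zero_add])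
      have hd : (n+1) ∣ (k - j) := hy ▸ (addOrderOf_dvd_iff_nsmul_eq_zero).2 this
      have := Nat.eq_zero_of_dvd_of_lt hd (by omega)
      omega
  set S : Finset E := (Finset.range (n+1)).image (fun k => a + k • y) with hS
  have hScard : S.card = n + 1 := by
    rw [hS, Finset.card_image_of_injOn hinj, Finset.card_range]
  have hSle : S.val ≤ M := by
    rw [Multiset.le_iff_subset S.nodup]
    intro b hb
    rw [Finset.mem_val, hS, Finset.mem_image] at hb
    rcases hb with ⟨k, -, rfl⟩
    exact hky k
  have hSM : S.val = M := Multiset.eq_of_le_of_card_le hSle (by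
    rw [hcard]
    exact le_of_eq hScard.symm)
  -- a + x ∈ M, hence x ∈ zmultiples y
  have hax : a + x ∈ M := by
    have : a + x ∈ M.map (fun e => e + x) := Multiset.mem_map_of_mem _ ha
    rwa [hMx] at this
  rw [← hSM] at hax
  rw [Finset.mem_val, hS, Finset.mem_image] at hax
  rcases hax with ⟨k, -, hk⟩
  have hxk : x = k • y := add_left_cancel hk.symm
  have hxmem : x ∈ AddSubgroup.zmultiples x ⊓ AddSubgroup.zmultiples y := by
    refine ⟨AddSubgroup.mem_zmultiples x, ?_⟩
    rw [hxk]
    exact AddSubgroup.nsmul_mem _ (AddSubgroup.mem_zmultiples y) k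
  rw [hxy] at hxmem
  have hx0 : x = 0 := hxmem
  rw [hx0, addOrderOf_zero] at hx
  omega
end

section
/- Let L be the additive subgroup of ℂ consisting of the Gaussian integers, L = {a + b·i : a, b ∈ ℤ}. For z, w ∈ ℂ, the five conditions (1+i)·w − 2·z ∈ L, −(1+i)·z + (i−1)·w ∈ L, (i−1)·w ∈ L, 2·z ∈ L, and (i−1)·z ∈ L hold simultaneously if and only if (z ∈ L or z − (1+i)/2 ∈ L) and (w ∈ L or w − (1+i)/2 ∈ L). -/
open Complex

/-- The additive subgroup of Gaussian integers `ℤ[i] ⊂ ℂ`. -/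
noncomputable def gaussianInts : AddSubgroup ℂ where
  carrier := {z : ℂ | ∃ a b : ℤ, z = (a : ℂ) + (b : ℂ) * I}
  zero_mem' := ⟨0, 0, by simp⟩
  add_mem' := by
    rintro u v ⟨a, b, rfl⟩ ⟨c, d, rfl⟩
    exact ⟨a + c, b + d, by push_cast; ring⟩
  neg_mem' := by
    rintro u ⟨a, b, rfl⟩
    exact ⟨-a, -b, by push_cast; ring⟩

/-- The subgroup of integers inside `ℝ`. -/
noncomputable def ZR : AddSubgroup ℝ := (Int.castAddHom ℝ).range

lemma mem_ZR {r : ℝ} : r ∈ ZR ↔ ∃ n : ℤ, (n : ℝ) = r := Iff.rfl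

lemma mem_gauss (c : ℂ) : c ∈ gaussianInts ↔ c.re ∈ ZR ∧ c.im ∈ ZR := by
  constructor
  · rintro ⟨a, b, rfl⟩
    exact ⟨mem_ZR.2 ⟨a, by simp⟩, mem_ZR.2 ⟨b, by simp⟩⟩
  · rintro ⟨ha, hb⟩
    obtain ⟨a, ha⟩ := mem_ZR.1 ha
    obtain ⟨b, hb⟩ := mem_ZR.1 hb
    exact ⟨a, b, by apply Complex.ext <;> simp [← ha, ← hb]⟩

lemma half_key (x y : ℝ) (h1 : x + y ∈ ZR) (h2 : x - y ∈ ZR) :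
    (x ∈ ZR ∧ y ∈ ZR) ∨ (x - 1/2 ∈ ZR ∧ y - 1/2 ∈ ZR) := by
  obtain ⟨s, hs⟩ := mem_ZR.1 h1
  obtain ⟨d, hd⟩ := mem_ZR.1 h2
  rcases Int.even_or_odd (s + d) with ⟨a, ha⟩ | ⟨a, ha⟩
  · left
    have ha' : (s : ℝ) + d = a + a := by exact_mod_cast congrArg (Int.cast : ℤ → ℝ) ha
    exact ⟨mem_ZR.2 ⟨a, by linarith⟩, mem_ZR.2 ⟨s - a, by push_cast; linarith⟩⟩
  · right
    have ha' : (s : ℝ) + d = 2 * a + 1 := by exact_mod_cast congrArg (Int.cast : ℤ → ℝ) ha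
    exact ⟨mem_ZR.2 ⟨a, by linarith⟩, mem_ZR.2 ⟨s - a - 1, by push_cast; linarith⟩⟩

/-- Fixed-point computation in the proof of Proposition 3.8 (type γ). -/
theorem stmt_11 (z w : ℂ) :
    ((1 + I) * w - 2 * z ∈ gaussianInts ∧
      -(1 + I) * z + (I - 1) * w ∈ gaussianInts ∧
      (I - 1) * w ∈ gaussianInts ∧
      2 * z ∈ gaussianInts ∧
      (I - 1) * z ∈ gaussianInts) ↔
    ((z ∈ gaussianInts ∨ z - (1 + I) / 2 ∈ gaussianInts) ∧
      (w ∈ gaussianInts ∨ w - (1 + I) / 2 ∈ gaussianInts)) := by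
  simp only [mem_gauss]
  simp only [add_re, add_im, sub_re, sub_im, mul_re, mul_im, I_re, I_im, one_re, one_im,
    neg_re, neg_im, ofReal_re, ofReal_im, re_ofNat, im_ofNat, div_ofNat_re, div_ofNat_im,
    mul_one, mul_zero, one_mul, zero_mul, zero_sub, sub_zero, add_zero, zero_add, neg_neg,
    neg_zero]
  set x := z.re; set y := z.im; set u := w.re; set v := w.im
  constructor
  · rintro ⟨-, -, ⟨h3r, h3i⟩, -, h5r, h5i⟩
    constructor
    · have hxy : x + y ∈ ZR := by
        have := neg_mem h5r; convert this using 1 <;> ring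
      have hxmy : x - y ∈ ZR := by
        convert h5i using 1 <;> ring
      exact half_key x y hxy hxmy
    · have huv : u + v ∈ ZR := by
        have := neg_mem h3r; convert this using 1 <;> ring
      have humv : u - v ∈ ZR := by
        convert h3i using 1 <;> ring
      exact half_key u v huv humv
  · rintro ⟨hz, hw⟩
    have hz' : x + y ∈ ZR ∧ x - y ∈ ZR := by
      rcases hz with ⟨hx, hy⟩ | ⟨hx, hy⟩
      · exact ⟨add_mem hx hy, sub_mem hx hy⟩
      · refine ⟨?_, ?_⟩
        · obtain ⟨n, hn⟩ := mem_ZR.1 (add_mem hx hy)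
          exact mem_ZR.2 ⟨n + 1, by push_cast; linarith⟩
        · have := sub_mem hx hy; convert this using 1 <;> ring
    have hw' : u + v ∈ ZR ∧ u - v ∈ ZR := by
      rcases hw with ⟨hx, hy⟩ | ⟨hx, hy⟩
      · exact ⟨add_mem hx hy, sub_mem hx hy⟩
      · refine ⟨?_, ?_⟩
        · obtain ⟨n, hn⟩ := mem_ZR.1 (add_mem hx hy)
          exact mem_ZR.2 ⟨n + 1, by push_cast; linarith⟩
        · have := sub_mem hx hy; convert this using 1 <;> ring
    obtain ⟨hzp, hzm⟩ := hz'
    obtain ⟨hwp, hwm⟩ := hw'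
    have h2x : 2 * x ∈ ZR := by have := add_mem hzp hzm; convert this using 1 <;> ring
    have h2y : 2 * y ∈ ZR := by have := sub_mem hzp hzm; convert this using 1 <;> ring
    refine ⟨⟨?_, ?_⟩, ⟨?_, ?_⟩, ⟨?_, ?_⟩, ⟨h2x, h2y⟩, ?_, ?_⟩
    · have := add_mem hwm (neg_mem h2x); convert this using 1 <;> ring
    · have := add_mem hwp (neg_mem h2y); convert this using 1 <;> ring
    · have := add_mem (neg_mem hzm) (neg_mem hwp); convert this using 1 <;> ring
    · have := add_mem (neg_mem hzp) hwm; convert this using 1 <;> ring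
    · have := neg_mem hwp; convert this using 1 <;> ring
    · convert hwm using 1 <;> ring
    · have := neg_mem hzp; convert this using 1 <;> ring
    · convert hzm using 1 <;> ring
end
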